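/- arXiv:1910.04366 — 3 statements merged into one kernel-verified Lean document; each statement's English description precedes it below -/
import Mathlib

section
/- Let A ∈ ℝ^{n×n} be invertible, Q = AᵀA, Γ the lower triangular part of Q, and J = I − AΓ^{-1}Aᵀ. Then the spectral radius of (I − Γ^{-T}Q)(I − Γ^{-1}Q) equals ‖J‖², and in particular is at least ρ(J)². -/
open Matrix Polynomial Real

noncomputable def lowerTri {n : ℕ} (Q : Matrix (Fin n) (Fin n) ℝ) : Matrix (Fin n) (Fin n) ℝ :=
  fun i j => if j ≤ i then Q i j else 0

noncomputable def l2norm {n : ℕ} (M : Matrix (Fin n) (Fin n) ℝ) : ℝ :=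
  ‖(Matrix.toEuclideanCLM (𝕜 := ℝ) M : EuclideanSpace ℝ (Fin n) →L[ℝ] EuclideanSpace ℝ (Fin n))‖

noncomputable def specRad {n : ℕ} (M : Matrix (Fin n) (Fin n) ℝ) : ℝ :=
  sSup (Set.image (fun z : ℂ => ‖z‖) (spectrum ℂ (M.map (algebraMap ℝ ℂ))))

/-!
With `B = Γ⁻ᵀAᵀ + Γ⁻¹Aᵀ - Γ⁻ᵀAᵀAΓ⁻¹Aᵀ` the update matrix is `1 - BA`, while `JᵀJ = 1 - AB`.
Since `AB` and `BA` have the same characteristic polynomial, the two matrices have the same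
spectrum. Over `ℂ`, `JᵀJ` is `star J * J` in the C⋆-algebra of matrices with the `ℓ²` operator
norm, so its spectral radius is `‖J‖²`; complexification does not change the operator norm because
`‖J z‖² = ‖J (re z)‖² + ‖J (im z)‖²`.
-/

lemma sSup_norm_spectrum_eq_toReal_spectralRadius {A : Type*} [NormedRing A]
    [NormedAlgebra ℂ A] [CompleteSpace A] (a : A) :
    sSup ((‖·‖) '' spectrum ℂ a) = (spectralRadius ℂ a).toReal := by
  rcases (spectrum ℂ a).eq_empty_or_nonempty with h | h
  · simp [h, spectralRadius]
  obtain ⟨z, hz, hzr⟩ := spectrum.exists_nnnorm_eq_spectralRadius_of_nonempty h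
  rw [← hzr]
  refine IsGreatest.csSup_eq ⟨⟨z, hz, rfl⟩, ?_⟩
  rintro - ⟨k, hk, rfl⟩
  have : (‖k‖₊ : ENNReal) ≤ ‖z‖₊ := hzr ▸ le_iSup₂ (α := ENNReal) k hk
  exact_mod_cast this

lemma CStarAlgebra.norm_le_norm_of_mem_spectrum {A : Type*} [CStarAlgebra A] {a : A} {z : ℂ}
    (hz : z ∈ spectrum ℂ a) : ‖z‖ ≤ ‖a‖ := by
  have : Nontrivial A := by
    by_contra h
    rw [not_nontrivial_iff_subsingleton] at h
    simp [spectrum.of_subsingleton] at hz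
  exact spectrum.norm_le_norm_of_mem hz

namespace Matrix

variable {K n : Type*} [Field K] [Fintype n] [DecidableEq n]

lemma spectrum_mul_comm (A B : Matrix n n K) : spectrum K (A * B) = spectrum K (B * A) := by
  ext r
  rw [mem_spectrum_iff_isRoot_charpoly, mem_spectrum_iff_isRoot_charpoly, charpoly_mul_comm]

lemma spectrum_one_sub_mul_comm (A B : Matrix n n K) :
    spectrum K (1 - A * B) = spectrum K (1 - B * A) := by
  rw [← map_one (algebraMap K (Matrix n n K)), ← spectrum.singleton_sub_eq,
    ← spectrum.singleton_sub_eq, spectrum_mul_comm]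

end Matrix

namespace EuclideanSpace

variable {n : Type*}

def re (z : EuclideanSpace ℂ n) : EuclideanSpace ℝ n := WithLp.toLp 2 fun i => (z i).re

def im (z : EuclideanSpace ℂ n) : EuclideanSpace ℝ n := WithLp.toLp 2 fun i => (z i).im

def ofReal (x : EuclideanSpace ℝ n) : EuclideanSpace ℂ n := WithLp.toLp 2 fun i => (x i : ℂ)

@[simp] lemma re_ofReal (x : EuclideanSpace ℝ n) : (ofReal x).re = x := by
  ext i; simp [re, ofReal]

@[simp] lemma im_ofReal (x : EuclideanSpace ℝ n) : (ofReal x).im = 0 := by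
  ext i; simp [im, ofReal]

lemma norm_sq_eq_norm_sq_re_add_norm_sq_im [Fintype n] (z : EuclideanSpace ℂ n) :
    ‖z‖ ^ 2 = ‖z.re‖ ^ 2 + ‖z.im‖ ^ 2 := by
  rw [EuclideanSpace.norm_sq_eq, EuclideanSpace.norm_sq_eq, EuclideanSpace.norm_sq_eq,
    ← Finset.sum_add_distrib]
  refine Finset.sum_congr rfl fun i _ => ?_
  rw [Complex.sq_norm, Complex.normSq_apply]
  simp only [re, im, PiLp.toLp_apply, Real.norm_eq_abs, sq_abs]
  ring

end EuclideanSpace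

namespace Matrix

open scoped Matrix.Norms.L2Operator

variable {n : Type*} [Fintype n] [DecidableEq n]

lemma re_toEuclideanCLM_map_ofReal (R : Matrix n n ℝ) (z : EuclideanSpace ℂ n) :
    (toEuclideanCLM (𝕜 := ℂ) (R.map (algebraMap ℝ ℂ)) z).re = toEuclideanCLM (𝕜 := ℝ) R z.re := by
  ext i; simp [EuclideanSpace.re, mulVec, dotProduct, Complex.re_sum]

lemma im_toEuclideanCLM_map_ofReal (R : Matrix n n ℝ) (z : EuclideanSpace ℂ n) :
    (toEuclideanCLM (𝕜 := ℂ) (R.map (algebraMap ℝ ℂ)) z).im = toEuclideanCLM (𝕜 := ℝ) R z.im := by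
  ext i; simp [EuclideanSpace.im, mulVec, dotProduct, Complex.im_sum]

lemma l2_opNorm_map_ofReal (R : Matrix n n ℝ) : ‖R.map (algebraMap ℝ ℂ)‖ = ‖R‖ := by
  set T := toEuclideanCLM (𝕜 := ℝ) R
  set Tc := toEuclideanCLM (𝕜 := ℂ) (R.map (algebraMap ℝ ℂ))
  have hsq (z : EuclideanSpace ℂ n) : ‖Tc z‖ ^ 2 = ‖T z.re‖ ^ 2 + ‖T z.im‖ ^ 2 := by
    rw [EuclideanSpace.norm_sq_eq_norm_sq_re_add_norm_sq_im, re_toEuclideanCLM_map_ofReal,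
      im_toEuclideanCLM_map_ofReal]
  change ‖Tc‖ = ‖T‖
  apply le_antisymm
  · refine Tc.opNorm_le_bound (norm_nonneg T) fun z => ?_
    refine (pow_le_pow_iff_left₀ (norm_nonneg _) (by positivity) two_ne_zero).1 ?_
    have hre := T.le_opNorm z.re
    have him := T.le_opNorm z.im
    calc ‖Tc z‖ ^ 2 = ‖T z.re‖ ^ 2 + ‖T z.im‖ ^ 2 := hsq z
      _ ≤ (‖T‖ * ‖z.re‖) ^ 2 + (‖T‖ * ‖z.im‖) ^ 2 := by gcongr
      _ = (‖T‖ * ‖z‖) ^ 2 := by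
        rw [mul_pow, mul_pow, mul_pow, EuclideanSpace.norm_sq_eq_norm_sq_re_add_norm_sq_im]
        ring
  · refine T.opNorm_le_bound (norm_nonneg Tc) fun x => ?_
    have hTx : ‖Tc (.ofReal x)‖ = ‖T x‖ := by simpa using hsq (.ofReal x)
    have hx : ‖EuclideanSpace.ofReal x‖ = ‖x‖ := by
      simpa using EuclideanSpace.norm_sq_eq_norm_sq_re_add_norm_sq_im (.ofReal x)
    rw [← hTx, ← hx]
    exact Tc.le_opNorm _

end Matrix

section

open scoped Matrix.Norms.L2Operator

variable {n : ℕ}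

lemma specRad_nonneg (R : Matrix (Fin n) (Fin n) ℝ) : 0 ≤ specRad R :=
  Real.sSup_nonneg <| by rintro - ⟨z, -, rfl⟩; exact norm_nonneg z

lemma specRad_le_l2norm (R : Matrix (Fin n) (Fin n) ℝ) : specRad R ≤ l2norm R := by
  change _ ≤ ‖R‖
  rw [← l2_opNorm_map_ofReal]
  refine Real.sSup_le ?_ (norm_nonneg _)
  rintro - ⟨z, hz, rfl⟩
  exact CStarAlgebra.norm_le_norm_of_mem_spectrum hz

lemma specRad_transpose_mul_self (R : Matrix (Fin n) (Fin n) ℝ) :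
    specRad (Rᵀ * R) = l2norm R ^ 2 := by
  have hstar : (Rᵀ * R).map (algebraMap ℝ ℂ) =
      star (R.map (algebraMap ℝ ℂ)) * R.map (algebraMap ℝ ℂ) := by
    rw [Matrix.map_mul]
    congr 1
    ext i j
    simp [star_apply]
  rw [specRad, hstar, sSup_norm_spectrum_eq_toReal_spectralRadius,
    CStarAlgebra.toReal_spectralRadius_star_mul_self_eq_norm_sq, l2_opNorm_map_ofReal]
  rfl

lemma specRad_one_sub_mul_comm (A B : Matrix (Fin n) (Fin n) ℝ) :
    specRad (1 - A * B) = specRad (1 - B * A) := by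
  simp only [specRad, ← RingHom.mapMatrix_apply, map_sub, map_one, map_mul,
    spectrum_one_sub_mul_comm]

end

theorem stmt4_general {n : ℕ} (A : Matrix (Fin n) (Fin n) ℝ)
    (Q Γ : Matrix (Fin n) (Fin n) ℝ) (hQ : Q = Aᵀ * A)
    (J : Matrix (Fin n) (Fin n) ℝ) (hJ : J = 1 - A * Γ⁻¹ * Aᵀ) :
    specRad ((1 - (Γᵀ)⁻¹ * Q) * (1 - Γ⁻¹ * Q)) = (l2norm J) ^ 2 ∧
    (l2norm J) ^ 2 ≥ (specRad J) ^ 2 := by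
  set B := (Γᵀ)⁻¹ * Aᵀ + Γ⁻¹ * Aᵀ - (Γᵀ)⁻¹ * Aᵀ * A * Γ⁻¹ * Aᵀ
  have hupdate : (1 - (Γᵀ)⁻¹ * Q) * (1 - Γ⁻¹ * Q) = 1 - B * A := by
    subst hQ
    simp only [B]
    noncomm_ring
  have hJJ : Jᵀ * J = 1 - A * B := by
    subst hJ
    rw [transpose_sub, transpose_one, transpose_mul, transpose_mul, transpose_transpose,
      transpose_nonsing_inv]
    simp only [B]
    noncomm_ring
  refine ⟨?_, pow_le_pow_left₀ (specRad_nonneg J) (specRad_le_l2norm J) 2⟩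
  rw [hupdate, specRad_one_sub_mul_comm, ← hJJ, specRad_transpose_mul_self]

/-- The spectral radius of the sGS-CD update matrix equals ‖J‖² with J = I - AΓ⁻¹Aᵀ,
which is at least ρ(J)². -/
theorem stmt4 {n : ℕ} (A : Matrix (Fin n) (Fin n) ℝ) (hA : IsUnit A.det)
    (Q Γ : Matrix (Fin n) (Fin n) ℝ) (hQ : Q = Aᵀ * A) (hΓ : Γ = lowerTri Q)
    (hΓu : IsUnit Γ.det)
    (J : Matrix (Fin n) (Fin n) ℝ) (hJ : J = 1 - A * Γ⁻¹ * Aᵀ) :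
    specRad ((1 - (Γᵀ)⁻¹ * Q) * (1 - Γ⁻¹ * Q)) = (l2norm J) ^ 2 ∧
    (l2norm J) ^ 2 ≥ (specRad J) ^ 2 :=
  stmt4_general A Q Γ hQ J hJ
end

section
/- Let Q ∈ ℝ^{n×n} be symmetric with Q₁₁ = 1, let Γ be the lower triangular part of Q, D the diagonal of Q, and define B = diag(1, Γ^{-T}_{2:n}·D_{2:n}) where Γ^{-T}_{2:n} and D_{2:n} are the trailing (n−1)×(n−1) submatrices of Γ^{-T} and D. If D = I then the matrices B^{-1}Q^{-1}Γ and ΓᵀQ^{-1}Γ have the same multiset of eigenvalues. -/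
open Matrix Polynomial Real

/-!
The first column of `Γ` is that of `Q`, so `Q⁻¹Γ` fixes `e₀`; since `Q₀₀ = 1`, the first row of
`Γ` is `e₀ᵀ`. Hence `B⁻¹` is `Γᵀ` with its first row replaced by `e₀ᵀ`, so `B⁻¹Q⁻¹Γ` and
`ΓᵀQ⁻¹Γ` differ only in their first row and both fix `e₀`. Expanding the characteristic
determinant along the first column, both characteristic polynomials are `X - 1` times that of
their common trailing block.
-/

namespace Matrix

variable {R : Type*} {n : ℕ}

lemma IsLowerTriangular.apply_zero_of_ne [Zero R] {M : Matrix (Fin (n + 1)) (Fin (n + 1)) R}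
    (hM : M.IsLowerTriangular) {j : Fin (n + 1)} (hj : j ≠ 0) : M 0 j = 0 :=
  @hM 0 j (Fin.pos_iff_ne_zero.2 hj)

variable [CommRing R]

lemma charmatrix_submatrix_succ (A : Matrix (Fin (n + 1)) (Fin (n + 1)) R) :
    (charmatrix A).submatrix Fin.succ Fin.succ = charmatrix (A.submatrix Fin.succ Fin.succ) := by
  ext i j
  obtain rfl | hij := eq_or_ne i j
  · simp [charmatrix_apply_eq]
  · simp [hij]

lemma charpoly_eq_X_sub_one_mul_charpoly_submatrix_succ (A : Matrix (Fin (n + 1)) (Fin (n + 1)) R)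
    (hA : A.col 0 = Pi.single 0 1) :
    A.charpoly = (X - 1) * (A.submatrix Fin.succ Fin.succ).charpoly := by
  have hA' (i : Fin (n + 1)) : A i 0 = (Pi.single 0 1 : Fin (n + 1) → R) i := congrFun hA i
  rw [charpoly, charpoly, det_succ_column_zero, ← charmatrix_submatrix_succ,
    Finset.sum_eq_single (0 : Fin (n + 1))]
  · simp [hA']
  · intro i _ hi
    simp [hA', hi]
  · simp

lemma charpoly_updateRow_zero {A : Matrix (Fin (n + 1)) (Fin (n + 1)) R}
    (hA : A.col 0 = Pi.single 0 1) {v : Fin (n + 1) → R} (hv : v 0 = 1) :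
    (A.updateRow 0 v).charpoly = A.charpoly := by
  have hA' : (A.updateRow 0 v).col 0 = Pi.single 0 1 := by
    ext i
    obtain rfl | hi := eq_or_ne i 0
    · simp [hv]
    · simpa [hi] using congrFun hA i
  rw [charpoly_eq_X_sub_one_mul_charpoly_submatrix_succ _ hA',
    charpoly_eq_X_sub_one_mul_charpoly_submatrix_succ _ hA]
  -- the trailing blocks coincide definitionally, as `Fin.succ i = 0` reduces to `False`
  congr 2

lemma updateRow_zero_mul_updateRow_zero {A B : Matrix (Fin (n + 1)) (Fin (n + 1)) R}
    (hA : ∀ i ≠ 0, A i 0 = 0) :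
    A.updateRow 0 (Pi.single 0 1) * B.updateRow 0 (Pi.single 0 1) =
      (A * B).updateRow 0 (Pi.single 0 1) := by
  ext i j
  obtain rfl | hi := eq_or_ne i 0
  · simp [mul_apply, Pi.single_apply]
  · simp [mul_apply, hi, Fin.sum_univ_succ, hA i hi]

lemma updateRow_one_zero :
    (1 : Matrix (Fin (n + 1)) (Fin (n + 1)) R).updateRow 0 (Pi.single 0 1) = 1 := by
  ext i j
  obtain rfl | hi := eq_or_ne i 0
  · simp [one_eq_pi_single]
  · simp [hi]

lemma inv_updateRow_zero_transpose_inv {M : Matrix (Fin (n + 1)) (Fin (n + 1)) R}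
    (hM : M.IsLowerTriangular) (hdet : IsUnit M.det) :
    ((M⁻¹)ᵀ.updateRow 0 (Pi.single 0 1))⁻¹ = Mᵀ.updateRow 0 (Pi.single 0 1) := by
  refine inv_eq_left_inv ?_
  rw [updateRow_zero_mul_updateRow_zero fun i hi => show M 0 i = 0 from hM.apply_zero_of_ne hi,
    ← transpose_mul, nonsing_inv_mul _ hdet, transpose_one, updateRow_one_zero]

lemma col_zero_mul {A B : Matrix (Fin (n + 1)) (Fin (n + 1)) R} (hA : A.col 0 = Pi.single 0 1)
    (hB : B.col 0 = Pi.single 0 1) : (A * B).col 0 = Pi.single 0 1 := by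
  rw [← mulVec_single_one, ← mulVec_mulVec, mulVec_single_one, hB, mulVec_single_one, hA]

end Matrix

section lowerTri

variable {n : ℕ}

lemma lowerTri_isLowerTriangular (Q : Matrix (Fin n) (Fin n) ℝ) :
    (lowerTri Q).IsLowerTriangular :=
  fun _ _ hij => if_neg (not_le.2 hij)

lemma det_lowerTri (Q : Matrix (Fin n) (Fin n) ℝ) : (lowerTri Q).det = ∏ i, Q i i := by
  simp [det_of_isLowerTriangular _ (lowerTri_isLowerTriangular Q), lowerTri]

variable {Q : Matrix (Fin (n + 1)) (Fin (n + 1)) ℝ}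

lemma transpose_lowerTri_col_zero (hQ : Q 0 0 = 1) :
    (lowerTri Q)ᵀ.col 0 = Pi.single 0 1 := by
  ext j
  obtain rfl | hj := eq_or_ne j 0
  · simp [lowerTri, hQ]
  · simp [hj, (lowerTri_isLowerTriangular Q).apply_zero_of_ne hj]

lemma inv_mul_lowerTri_col_zero (hQ : IsUnit Q.det) :
    (Q⁻¹ * lowerTri Q).col 0 = Pi.single 0 1 := by
  have hcol : (lowerTri Q).col 0 = Q.col 0 := by
    ext i
    simp [lowerTri]
  rw [← mulVec_single_one, ← mulVec_mulVec, mulVec_single_one, hcol, ← mulVec_single_one,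
    mulVec_mulVec, nonsing_inv_mul _ hQ, one_mulVec]

end lowerTri

theorem stmt6_general {n : ℕ} (Q Γ B : Matrix (Fin (n + 1)) (Fin (n + 1)) ℝ)
    (hQpd : Q.PosDef) (hdiag : ∀ i, Q i i = 1)
    (hΓ : Γ = lowerTri Q)
    (hB : ∀ i j, B i j = if i = 0 then (if j = 0 then (1 : ℝ) else 0)
        else if j = 0 then 0 else (Γ⁻¹)ᵀ i j) :
    (B⁻¹ * Q⁻¹ * Γ).charpoly = (Γᵀ * Q⁻¹ * Γ).charpoly := by
  subst hΓ
  set Γ := lowerTri Q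
  have hΓ_tri : Γ.IsLowerTriangular := lowerTri_isLowerTriangular Q
  have hΓ_det : IsUnit Γ.det := by simp [Γ, det_lowerTri, hdiag]
  have hΓinv_tri : Γ⁻¹.IsLowerTriangular :=
    have := Γ.invertibleOfIsUnitDet hΓ_det
    blockTriangular_inv_of_blockTriangular hΓ_tri
  have hB_eq : B = (Γ⁻¹)ᵀ.updateRow 0 (Pi.single 0 1) := by
    ext i j
    obtain rfl | hi := eq_or_ne i 0
    · simp [hB, Pi.single_apply]
    · obtain rfl | hj := eq_or_ne j 0
      · simp [hB, hi, hΓinv_tri.apply_zero_of_ne hi]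
      · simp [hB, hi, hj]
  have hP := inv_mul_lowerTri_col_zero hQpd.det_pos.ne'.isUnit
  have hΓP := col_zero_mul (transpose_lowerTri_col_zero (hdiag 0)) hP
  rw [hB_eq, inv_updateRow_zero_transpose_inv hΓ_tri hΓ_det, Matrix.mul_assoc, Matrix.mul_assoc,
    updateRow_mul, charpoly_updateRow_zero hΓP]
  simpa [single_one_vecMul] using congrFun hP 0

/-- With unit diagonal (D = I), the matrices B⁻¹Q⁻¹Γ and ΓᵀQ⁻¹Γ have the same multiset of
eigenvalues (equal characteristic polynomials). -/
theorem stmt6 {n : ℕ} (Q Γ B : Matrix (Fin (n + 1)) (Fin (n + 1)) ℝ)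
    (hQsym : Q.IsSymm) (hQpd : Q.PosDef) (hdiag : ∀ i, Q i i = 1)
    (hΓ : Γ = lowerTri Q)
    (hB : ∀ i j, B i j = if i = 0 then (if j = 0 then (1 : ℝ) else 0)
        else if j = 0 then 0 else (Γ⁻¹)ᵀ i j) :
    (B⁻¹ * Q⁻¹ * Γ).charpoly = (Γᵀ * Q⁻¹ * Γ).charpoly :=
  stmt6_general Q Γ B hQpd hdiag hΓ hB
end

section
/- Let A be symmetric positive definite with eigenvalues λ₁,…,λ_n, diagonal entries L_i = A_{ii}, and lower triangular part Γ. Then ‖Γ‖² ≤ ‖Γ‖_F² = (1/2)(‖A‖_F² + Σ_i A_{ii}²) ≤ λ_max(A)·Σ_i L_i, and consequently ‖ΓᵀA^{-1}Γ‖ ≤ κ(A)·Σ_i L_i where κ(A) = λ_max(A)/λ_min(A). -/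
open Matrix Polynomial Real

noncomputable def frob {n : ℕ} (M : Matrix (Fin n) (Fin n) ℝ) : ℝ :=
  Real.sqrt (∑ i, ∑ j, (M i j) ^ 2)

/-!
Since `A` is symmetric, `Γ` contains each off-diagonal entry of `A` once and the diagonal once,
so `2‖Γ‖_F² = ‖A‖_F² + Σ Aᵢᵢ²`. Both terms are at most `λ_max · tr A`: `‖A‖_F² = Σ λᵢ² ≤ λ_max Σ λᵢ`
and `0 ≤ Aᵢᵢ ≤ λ_max`. Finally `‖ΓᵀA⁻¹Γ‖ ≤ ‖A⁻¹‖ ‖Γ‖²`, and `‖A⁻¹‖ ≤ 1/λ_min` because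
`λ_min ‖y‖² ≤ ⟪y, Ay⟫ ≤ ‖y‖ ‖Ay‖`.
-/

open scoped Matrix.Norms.L2Operator

section

variable {ι : Type*} [Fintype ι] [DecidableEq ι]

lemma Matrix.l2_opNorm_le_sqrt_sum_sq (M : Matrix ι ι ℝ) : ‖M‖ ≤ √(∑ i, ∑ j, M i j ^ 2) := by
  rw [cstar_norm_def]
  refine ContinuousLinearMap.opNorm_le_bound _ (Real.sqrt_nonneg _) fun x => ?_
  rw [EuclideanSpace.norm_eq, EuclideanSpace.norm_eq, ← Real.sqrt_mul (by positivity)]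
  refine Real.sqrt_le_sqrt ?_
  simp only [ofLp_toEuclideanCLM, Real.norm_eq_abs, sq_abs]
  rw [Finset.sum_mul]
  exact Finset.sum_le_sum fun i _ => Finset.sum_mul_sq_le_sq_mul_sq _ (M i) x.ofLp

lemma Matrix.l2_opNorm_inv_le_of_le_dotProduct_mulVec {A : Matrix ι ι ℝ} (hA : IsUnit A) {c : ℝ}
    (hc : 0 < c) (h : ∀ x, c * (x ⬝ᵥ x) ≤ x ⬝ᵥ (A *ᵥ x)) : ‖A⁻¹‖ ≤ c⁻¹ := by
  rw [cstar_norm_def]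
  refine ContinuousLinearMap.opNorm_le_bound _ (by positivity) fun x => ?_
  set y := toEuclideanCLM (𝕜 := ℝ) A⁻¹ x
  have hAy : A *ᵥ y.ofLp = x.ofLp := by
    rw [ofLp_toEuclideanCLM, mulVec_mulVec, mul_nonsing_inv _ ((isUnit_iff_isUnit_det _).1 hA),
      one_mulVec]
  have hinner (u v : EuclideanSpace ℝ ι) : inner ℝ u v = u.ofLp ⬝ᵥ v.ofLp := by
    simp [EuclideanSpace.inner_eq_star_dotProduct, dotProduct_comm]
  have key : c * ‖y‖ ^ 2 ≤ ‖y‖ * ‖x‖ :=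
    calc c * ‖y‖ ^ 2 = c * (y.ofLp ⬝ᵥ y.ofLp) := by rw [← real_inner_self_eq_norm_sq, hinner]
      _ ≤ y.ofLp ⬝ᵥ (A *ᵥ y.ofLp) := h _
      _ = inner ℝ y x := by rw [hAy, hinner]
      _ ≤ ‖y‖ * ‖x‖ := real_inner_le_norm _ _
  rw [le_inv_mul_iff₀ hc]
  rcases (norm_nonneg y).eq_or_lt with hy | hy
  · simp [← hy]
  · nlinarith

lemma Matrix.l2_opNorm_transpose_mul_mul_self_le (B Γ : Matrix ι ι ℝ) :
    ‖Γᵀ * B * Γ‖ ≤ ‖B‖ * ‖Γ‖ ^ 2 := by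
  have hΓ : ‖Γᵀ‖ = ‖Γ‖ := by
    rw [← conjTranspose_eq_transpose_of_trivial, l2_opNorm_conjTranspose]
  calc ‖Γᵀ * B * Γ‖ ≤ ‖Γᵀ‖ * ‖B‖ * ‖Γ‖ :=
        (norm_mul_le _ _).trans (by gcongr; exact norm_mul_le _ _)
    _ = ‖B‖ * ‖Γ‖ ^ 2 := by rw [hΓ]; ring

variable {A : Matrix ι ι ℝ}

lemma Matrix.IsHermitian.posSemidef_sub_algebraMap (hA : A.IsHermitian) {c : ℝ}
    (h : ∀ x ∈ spectrum ℝ A, c ≤ x) : (A - algebraMap ℝ _ c).PosSemidef := by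
  refine posSemidef_iff_isHermitian_and_spectrum_nonneg.2
    ⟨hA.sub (IsSelfAdjoint.algebraMap _ (.all c)), ?_⟩
  rw [← spectrum.sub_singleton_eq]
  rintro _ ⟨x, hx, _, rfl, rfl⟩
  simpa using h x hx

lemma Matrix.IsHermitian.posSemidef_algebraMap_sub (hA : A.IsHermitian) {c : ℝ}
    (h : ∀ x ∈ spectrum ℝ A, x ≤ c) : (algebraMap ℝ _ c - A).PosSemidef := by
  refine posSemidef_iff_isHermitian_and_spectrum_nonneg.2
    ⟨(IsSelfAdjoint.algebraMap _ (.all c)).sub hA, ?_⟩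
  rw [← spectrum.singleton_sub_eq]
  rintro _ ⟨_, rfl, x, hx, rfl⟩
  simpa using h x hx

lemma Matrix.IsHermitian.diag_le_sSup_spectrum (hA : A.IsHermitian) (i : ι) :
    A i i ≤ sSup (spectrum ℝ A) := by
  have := (hA.posSemidef_algebraMap_sub fun _ hx =>
    le_csSup A.finite_real_spectrum.bddAbove hx).diag_nonneg (i := i)
  simpa [algebraMap_eq_diagonal] using this

lemma Matrix.IsHermitian.sInf_spectrum_mul_dotProduct_self_le (hA : A.IsHermitian) (x : ι → ℝ) :
    sInf (spectrum ℝ A) * (x ⬝ᵥ x) ≤ x ⬝ᵥ (A *ᵥ x) := by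
  have := (hA.posSemidef_sub_algebraMap fun _ hx =>
    csInf_le A.finite_real_spectrum.bddBelow hx).dotProduct_mulVec_nonneg x
  simpa [Algebra.algebraMap_eq_smul_one, sub_mulVec, smul_mulVec, dotProduct_sub] using this

lemma Matrix.IsHermitian.trace_cfc {𝕜 : Type*} [RCLike 𝕜] {M : Matrix ι ι 𝕜}
    (hM : M.IsHermitian) (f : ℝ → ℝ) : (cfc f M).trace = ∑ i, (f (hM.eigenvalues i) : 𝕜) := by
  rw [hM.cfc_eq, IsHermitian.cfc, Unitary.conjStarAlgAut_apply, trace_mul_cycle,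
    Unitary.coe_star_mul_self, one_mul, trace_diagonal]
  rfl

lemma Matrix.IsHermitian.sum_sq_eq_sum_eigenvalues_sq (hA : A.IsHermitian) :
    ∑ i, ∑ j, A i j ^ 2 = ∑ i, hA.eigenvalues i ^ 2 := by
  have h := hA.trace_cfc (· ^ 2)
  rw [cfc_pow_id A 2 hA.isSelfAdjoint] at h
  simp only [RCLike.ofReal_real_eq_id, id_eq] at h
  rw [← h, sq A, trace]
  refine Finset.sum_congr rfl fun i _ => Finset.sum_congr rfl fun j _ => ?_
  change A i j ^ 2 = A i j * A j i
  rw [sq, ← hA.apply j i, star_trivial]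

lemma Matrix.PosSemidef.sInf_spectrum_nonneg (hA : A.PosSemidef) : 0 ≤ sInf (spectrum ℝ A) := by
  refine Real.sInf_nonneg fun x hx => ?_
  rw [hA.1.spectrum_real_eq_range_eigenvalues] at hx
  obtain ⟨i, rfl⟩ := hx
  exact hA.eigenvalues_nonneg i

lemma Matrix.PosSemidef.sum_sq_le_sSup_spectrum_mul_trace (hA : A.PosSemidef) :
    ∑ i, ∑ j, A i j ^ 2 ≤ sSup (spectrum ℝ A) * A.trace := by
  rw [hA.1.sum_sq_eq_sum_eigenvalues_sq, hA.1.trace_eq_sum_eigenvalues, Finset.mul_sum]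
  refine Finset.sum_le_sum fun i _ => ?_
  rw [sq]
  exact mul_le_mul_of_nonneg_right
    (le_csSup A.finite_real_spectrum.bddAbove (hA.1.eigenvalues_mem_spectrum_real i))
    (hA.eigenvalues_nonneg i)

lemma Matrix.PosSemidef.sum_diag_sq_le_sSup_spectrum_mul_trace (hA : A.PosSemidef) :
    ∑ i, A i i ^ 2 ≤ sSup (spectrum ℝ A) * A.trace := by
  rw [trace, Finset.mul_sum]
  refine Finset.sum_le_sum fun i _ => ?_
  rw [sq]
  exact mul_le_mul_of_nonneg_right (hA.1.diag_le_sSup_spectrum i) hA.diag_nonneg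

lemma Matrix.PosDef.sInf_spectrum_pos [Nonempty ι] (hA : A.PosDef) : 0 < sInf (spectrum ℝ A) := by
  rw [hA.1.spectrum_real_eq_range_eigenvalues]
  obtain ⟨i, hi⟩ := (Set.range_nonempty hA.1.eigenvalues).csInf_mem (Set.finite_range _)
  exact hi ▸ hA.eigenvalues_pos i

lemma Matrix.PosDef.l2_opNorm_inv_le (hA : A.PosDef) : ‖A⁻¹‖ ≤ (sInf (spectrum ℝ A))⁻¹ := by
  cases isEmpty_or_nonempty ι
  -- for empty `ι`, `sInf ∅ = 0` and `0⁻¹ = 0`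
  · rw [Subsingleton.elim A⁻¹ 0, norm_zero]
    exact inv_nonneg.2 hA.posSemidef.sInf_spectrum_nonneg
  · exact l2_opNorm_inv_le_of_le_dotProduct_mulVec hA.isUnit hA.sInf_spectrum_pos
      hA.1.sInf_spectrum_mul_dotProduct_self_le

end

lemma two_mul_sum_sq_lowerTri {n : ℕ} {A : Matrix (Fin n) (Fin n) ℝ} (hA : A.IsSymm) :
    2 * ∑ i, ∑ j, lowerTri A i j ^ 2 = ∑ i, ∑ j, A i j ^ 2 + ∑ i, A i i ^ 2 := by
  have hpair (i j : Fin n) :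
      lowerTri A i j ^ 2 + lowerTri A j i ^ 2 = A i j ^ 2 + if i = j then A i j ^ 2 else 0 := by
    have hji : A j i = A i j := congrFun (congrFun hA i) j
    rcases lt_trichotomy i j with h | rfl | h
    · simp [lowerTri, h.not_ge, h.le, h.ne, hji]
    · simp [lowerTri]
    · simp [lowerTri, h.not_ge, h.le, h.ne']
  calc 2 * ∑ i, ∑ j, lowerTri A i j ^ 2
      = ∑ i, ∑ j, (lowerTri A i j ^ 2 + lowerTri A j i ^ 2) := by
        rw [two_mul]
        nth_rw 2 [Finset.sum_comm]
        simp only [Finset.sum_add_distrib]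
    _ = ∑ i, ∑ j, A i j ^ 2 + ∑ i, A i i ^ 2 := by
        simp only [hpair, Finset.sum_add_distrib, Finset.sum_ite_eq, Finset.mem_univ, if_true]

lemma frob_sq {n : ℕ} (M : Matrix (Fin n) (Fin n) ℝ) : frob M ^ 2 = ∑ i, ∑ j, M i j ^ 2 :=
  Real.sq_sqrt (by positivity)

lemma l2norm_le_frob {n : ℕ} (M : Matrix (Fin n) (Fin n) ℝ) : l2norm M ≤ frob M :=
  M.l2_opNorm_le_sqrt_sum_sq

/-- Bounds on ‖Γ‖² via the Frobenius norm, and the resulting bound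
‖ΓᵀA⁻¹Γ‖ ≤ κ(A)·Σᵢ Lᵢ. -/
theorem stmt12 {n : ℕ} (A Γ : Matrix (Fin n) (Fin n) ℝ) (hA : A.PosDef)
    (hΓ : Γ = lowerTri A) :
    l2norm Γ ^ 2 ≤ frob Γ ^ 2 ∧
    frob Γ ^ 2 = (1 / 2) * (frob A ^ 2 + ∑ i, (A i i) ^ 2) ∧
    (1 / 2) * (frob A ^ 2 + ∑ i, (A i i) ^ 2) ≤ sSup (spectrum ℝ A) * ∑ i, A i i ∧
    l2norm (Γᵀ * A⁻¹ * Γ)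
      ≤ (sSup (spectrum ℝ A) / sInf (spectrum ℝ A)) * ∑ i, A i i := by
  have hfrob : frob Γ ^ 2 = (1 / 2) * (frob A ^ 2 + ∑ i, (A i i) ^ 2) := by
    rw [hΓ, frob_sq, frob_sq]
    have := two_mul_sum_sq_lowerTri (isHermitian_iff_isSymm.1 hA.1)
    linarith
  have hbound :
      (1 / 2) * (frob A ^ 2 + ∑ i, (A i i) ^ 2) ≤ sSup (spectrum ℝ A) * ∑ i, A i i := by
    have hentries := hA.posSemidef.sum_sq_le_sSup_spectrum_mul_trace
    have hdiag := hA.posSemidef.sum_diag_sq_le_sSup_spectrum_mul_trace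
    simp only [trace, diag_apply] at hentries hdiag
    rw [frob_sq]
    linarith
  have hnorm : l2norm Γ ^ 2 ≤ frob Γ ^ 2 :=
    pow_le_pow_left₀ (norm_nonneg _) (l2norm_le_frob Γ) 2
  refine ⟨hnorm, hfrob, hbound, ?_⟩
  have hinv_nonneg := inv_nonneg.2 hA.posSemidef.sInf_spectrum_nonneg
  calc l2norm (Γᵀ * A⁻¹ * Γ) ≤ ‖A⁻¹‖ * l2norm Γ ^ 2 :=
        l2_opNorm_transpose_mul_mul_self_le A⁻¹ Γ
    _ ≤ (sInf (spectrum ℝ A))⁻¹ * frob Γ ^ 2 := by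
        gcongr
        exact hA.l2_opNorm_inv_le
    _ ≤ (sInf (spectrum ℝ A))⁻¹ * (sSup (spectrum ℝ A) * ∑ i, A i i) := by
        gcongr
        exact hfrob ▸ hbound
    _ = (sSup (spectrum ℝ A) / sInf (spectrum ℝ A)) * ∑ i, A i i := by ring
end
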